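/- Let μ be a Borel probability measure on ℝⁿ, let σ > 0, and let g_σ(z) = (2πσ²)^{−n/2} exp(−‖z‖²/(2σ²)) be the density of the Gaussian N(0, σ²I). Define the smoothed density q(y) = ∫ g_σ(y − x) dμ(x). Then q is strictly positive and differentiable on ℝⁿ, the posterior mean m(y) = (∫ x · g_σ(y − x) dμ(x)) / q(y) is well defined (the integrand is μ-integrable for each y), and for every y ∈ ℝⁿ the identity m(y) − y = σ² ∇ log q(y) holds (Tweedie's formula). -/

import Mathlib

/-!
Differentiating `q y = ∫ g (y - x) dμ` under the integral sign (legitimate because `g` and `∇g`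
are bounded and continuous) gives `∇q y = ∫ ∇g (y - x) dμ`, and the Gaussian satisfies
`σ² ∇g z = -g z • z`. Hence `σ² ∇q y = ∫ g (y - x) • (x - y) dμ = q y • (m y - y)`, and dividing
by `q y > 0` gives `m y - y = σ² ∇q y / q y = σ² ∇(log q) y`.
-/

open MeasureTheory

section Convolution

variable {E F : Type*} [NormedAddCommGroup E] [MeasurableSpace E] [BorelSpace E]
  [SecondCountableTopology E] [NormedAddCommGroup F] {μ : Measure E} [IsFiniteMeasure μ]

theorem integrable_comp_sub_of_norm_le {f : E → F} (hf : Continuous f) {C : ℝ}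
    (hC : ∀ z, ‖f z‖ ≤ C) (y : E) : Integrable (fun x => f (y - x)) μ :=
  Integrable.of_bound (hf.comp (continuous_const.sub continuous_id)).aestronglyMeasurable C
    (ae_of_all _ fun _ => hC _)

theorem hasFDerivAt_integral_comp_sub [NormedSpace ℝ E] [NormedSpace ℝ F] [CompleteSpace F]
    {φ : E → F} {φ' : E → E →L[ℝ] F} (hφ : ∀ z, HasFDerivAt φ (φ' z) z) (hφ' : Continuous φ')
    {C C' : ℝ} (hC : ∀ z, ‖φ z‖ ≤ C) (hC' : ∀ z, ‖φ' z‖ ≤ C') (y : E) :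
    HasFDerivAt (fun y => ∫ x, φ (y - x) ∂μ) (∫ x, φ' (y - x) ∂μ) y := by
  have hφc : Continuous φ := continuous_iff_continuousAt.2 fun z => (hφ z).continuousAt
  exact hasFDerivAt_integral_of_dominated_of_fderiv_le (bound := fun _ => C')
    (F' := fun y x => φ' (y - x)) Filter.univ_mem
    (Filter.Eventually.of_forall fun y => (integrable_comp_sub_of_norm_le hφc hC y).1)
    (integrable_comp_sub_of_norm_le hφc hC y) (integrable_comp_sub_of_norm_le hφ' hC' y).1
    (ae_of_all _ fun _ _ _ => hC' _) (integrable_const C')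
    (ae_of_all _ fun x _ _ => (hasFDerivAt_comp_sub x).2 (hφ _))

end Convolution

section Gradient

variable {E : Type*} [NormedAddCommGroup E] [InnerProductSpace ℝ E] [CompleteSpace E]

theorem HasGradientAt.log {f : E → ℝ} {f' : E} {x : E} (hf : HasGradientAt f f' x)
    (hx : f x ≠ 0) : HasGradientAt (fun y => Real.log (f y)) ((f x)⁻¹ • f') x := by
  rw [hasGradientAt_iff_hasFDerivAt] at hf ⊢
  simpa using hf.log hx

theorem hasGradientAt_integral_comp_sub [MeasurableSpace E] [BorelSpace E]
    [SecondCountableTopology E] {μ : Measure E} [IsFiniteMeasure μ] {φ : E → ℝ} {φ' : E → E}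
    (hφ : ∀ z, HasGradientAt φ (φ' z) z) (hφ' : Continuous φ') {C C' : ℝ}
    (hC : ∀ z, ‖φ z‖ ≤ C) (hC' : ∀ z, ‖φ' z‖ ≤ C') (y : E) :
    HasGradientAt (fun y => ∫ x, φ (y - x) ∂μ) (∫ x, φ' (y - x) ∂μ) y := by
  rw [hasGradientAt_iff_hasFDerivAt]
  change HasFDerivAt _ (innerSL ℝ _) _
  rw [← (innerSL ℝ).integral_comp_commSL (by simp) (integrable_comp_sub_of_norm_le hφ' hC' y)]
  exact hasFDerivAt_integral_comp_sub (fun z => (hφ z).hasFDerivAt)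
    ((InnerProductSpace.toDual ℝ E).continuous.comp hφ') hC (by simpa using hC') y

end Gradient

theorem mul_exp_neg_sq_div_le {σ : ℝ} (hσ : 0 < σ) (t : ℝ) :
    t * Real.exp (-t ^ 2 / (2 * σ ^ 2)) ≤ σ := by
  have key : t ≤ σ * Real.exp (t ^ 2 / (2 * σ ^ 2)) :=
    calc t ≤ σ * (t ^ 2 / (2 * σ ^ 2) + 1) := by
          field_simp; nlinarith [sq_nonneg (t - σ)]
      _ ≤ σ * Real.exp (t ^ 2 / (2 * σ ^ 2)) := by gcongr; exact Real.add_one_le_exp _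
  rwa [neg_div, Real.exp_neg, ← div_eq_mul_inv, div_le_iff₀ (Real.exp_pos _)]

section GaussianDensity

variable {E : Type*} [NormedAddCommGroup E] [InnerProductSpace ℝ E]

noncomputable def gaussianDensity (σ : ℝ) (z : E) : ℝ :=
  (2 * Real.pi * σ ^ 2) ^ (-(Module.finrank ℝ E : ℝ) / 2) * Real.exp (-‖z‖ ^ 2 / (2 * σ ^ 2))

theorem gaussianDensity_pos {σ : ℝ} (hσ : σ ≠ 0) (z : E) : 0 < gaussianDensity σ z := by
  unfold gaussianDensity; positivity

theorem continuous_gaussianDensity (σ : ℝ) : Continuous (gaussianDensity σ : E → ℝ) := by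
  unfold gaussianDensity; fun_prop

theorem norm_gaussianDensity_le (σ : ℝ) (z : E) :
    ‖gaussianDensity σ z‖ ≤ gaussianDensity σ (0 : E) := by
  unfold gaussianDensity
  rw [Real.norm_of_nonneg (by positivity)]
  gcongr
  simp

theorem norm_mul_gaussianDensity_le {σ : ℝ} (hσ : 0 < σ) (z : E) :
    ‖z‖ * gaussianDensity σ z ≤ σ * gaussianDensity σ (0 : E) := by
  unfold gaussianDensity
  set c := (2 * Real.pi * σ ^ 2) ^ (-(Module.finrank ℝ E : ℝ) / 2)
  have hc : 0 ≤ c := by positivity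
  calc ‖z‖ * (c * Real.exp (-‖z‖ ^ 2 / (2 * σ ^ 2)))
      = c * (‖z‖ * Real.exp (-‖z‖ ^ 2 / (2 * σ ^ 2))) := by ring
    _ ≤ c * σ := by gcongr; exact mul_exp_neg_sq_div_le hσ _
    _ = σ * (c * Real.exp (-‖(0 : E)‖ ^ 2 / (2 * σ ^ 2))) := by simp [mul_comm]

variable [CompleteSpace E]

theorem hasGradientAt_gaussianDensity (σ : ℝ) (z : E) :
    HasGradientAt (gaussianDensity σ) (-(σ ^ 2)⁻¹ • gaussianDensity σ z • z) z := by
  set c := (2 * Real.pi * σ ^ 2) ^ (-(Module.finrank ℝ E : ℝ) / 2)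
  have hform : gaussianDensity σ = fun y : E => c * Real.exp (-(2 * σ ^ 2)⁻¹ * ‖y‖ ^ 2) := by
    funext y; unfold gaussianDensity; congr 2; ring
  rw [hasGradientAt_iff_hasFDerivAt, hform]
  refine (((hasStrictFDerivAt_norm_sq z).hasFDerivAt.const_mul _).exp.const_mul c).congr_fderiv ?_
  ext v
  simp
  ring

theorem gradient_gaussianDensity (σ : ℝ) (z : E) :
    gradient (gaussianDensity σ) z = -(σ ^ 2)⁻¹ • gaussianDensity σ z • z :=
  (hasGradientAt_gaussianDensity σ z).gradient

theorem continuous_gradient_gaussianDensity (σ : ℝ) :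
    Continuous (gradient (gaussianDensity σ : E → ℝ)) := by
  rw [funext (gradient_gaussianDensity σ)]
  have := continuous_gaussianDensity (E := E) σ
  fun_prop

theorem norm_gradient_gaussianDensity_le {σ : ℝ} (hσ : 0 < σ) (z : E) :
    ‖gradient (gaussianDensity σ) z‖ ≤ σ⁻¹ * gaussianDensity σ (0 : E) := by
  rw [gradient_gaussianDensity, norm_smul, norm_smul, norm_neg, norm_inv,
    Real.norm_of_nonneg (gaussianDensity_pos hσ.ne' z).le, norm_pow, Real.norm_of_nonneg hσ.le]
  calc (σ ^ 2)⁻¹ * (gaussianDensity σ z * ‖z‖)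
      ≤ (σ ^ 2)⁻¹ * (σ * gaussianDensity σ (0 : E)) := by
        gcongr (σ ^ 2)⁻¹ * ?_; rw [mul_comm]; exact norm_mul_gaussianDensity_le hσ z
    _ = σ⁻¹ * gaussianDensity σ (0 : E) := by field_simp

theorem sq_smul_gradient_gaussianDensity {σ : ℝ} (hσ : σ ≠ 0) (z : E) :
    σ ^ 2 • gradient (gaussianDensity σ) z = -(gaussianDensity σ z • z) := by
  rw [gradient_gaussianDensity, smul_smul, mul_neg, mul_inv_cancel₀ (pow_ne_zero 2 hσ),
    neg_smul, one_smul]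

end GaussianDensity

/-- Tweedie's formula. Let `μ` be a Borel probability measure on ℝⁿ, `σ > 0`, and let
`g` be the density of the Gaussian `N(0, σ²I)`. Then the smoothed density
`q(y) = ∫ g(y − x) dμ(x)` is strictly positive and differentiable, the posterior-mean
integrand `x ↦ g(y − x) • x` is `μ`-integrable for each `y`, and the posterior mean
`m(y) = (∫ g(y − x) • x dμ(x)) / q(y)` satisfies `m(y) − y = σ² ∇ log q(y)`. -/
theorem tweedie_formula {n : ℕ}
    (μ : Measure (EuclideanSpace ℝ (Fin n))) [IsProbabilityMeasure μ]
    (σ : ℝ) (hσ : 0 < σ)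
    (g : EuclideanSpace ℝ (Fin n) → ℝ)
    (hg : ∀ z, g z = (2 * Real.pi * σ ^ 2) ^ (-(n : ℝ) / 2) *
      Real.exp (-‖z‖ ^ 2 / (2 * σ ^ 2)))
    (q : EuclideanSpace ℝ (Fin n) → ℝ)
    (hq : ∀ y, q y = ∫ x, g (y - x) ∂μ) :
    (∀ y, 0 < q y) ∧ Differentiable ℝ q ∧
    (∀ y, Integrable (fun x => g (y - x) • x) μ) ∧
    (∀ y, (q y)⁻¹ • (∫ x, g (y - x) • x ∂μ) - y
        = σ ^ 2 • gradient (fun z => Real.log (q z)) y) := by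
  obtain rfl : g = gaussianDensity σ := funext fun z => by
    rw [hg, gaussianDensity, finrank_euclideanSpace_fin]
  have hg_int := integrable_comp_sub_of_norm_le (μ := μ) (continuous_gaussianDensity σ)
    (norm_gaussianDensity_le σ)
  have hgrad_int := integrable_comp_sub_of_norm_le (μ := μ)
    (continuous_gradient_gaussianDensity σ) (norm_gradient_gaussianDensity_le hσ)
  have hq_grad (y) : HasGradientAt q (∫ x, gradient (gaussianDensity σ) (y - x) ∂μ) y := by
    rw [funext hq]
    exact hasGradientAt_integral_comp_sub
      (fun z => (hasGradientAt_gaussianDensity σ z).differentiableAt.hasGradientAt)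
      (continuous_gradient_gaussianDensity σ) (norm_gaussianDensity_le σ)
      (norm_gradient_gaussianDensity_le hσ) y
  have hq_pos (y) : 0 < q y := by
    rw [hq, integral_pos_iff_support_of_nonneg (fun x => (gaussianDensity_pos hσ.ne' _).le)
      (hg_int y)]
    simp [Function.support_eq_univ fun x => (gaussianDensity_pos hσ.ne' (y - x)).ne']
  have hsplit (y x : EuclideanSpace ℝ (Fin n)) : gaussianDensity σ (y - x) • x
      = σ ^ 2 • gradient (gaussianDensity σ) (y - x) + gaussianDensity σ (y - x) • y := by
    rw [sq_smul_gradient_gaussianDensity hσ.ne', smul_sub]; abel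
  have hsplit_integral (y) : ∫ x, gaussianDensity σ (y - x) • x ∂μ
      = σ ^ 2 • ∫ x, gradient (gaussianDensity σ) (y - x) ∂μ + q y • y := by
    rw [integral_congr_ae (ae_of_all _ (hsplit y)),
      integral_add ((hgrad_int y).fun_smul _) ((hg_int y).smul_const y), integral_smul,
      integral_smul_const, hq]
  refine ⟨hq_pos, fun y => (hq_grad y).differentiableAt, fun y => ?_, fun y => ?_⟩
  · rw [funext (hsplit y)]
    exact ((hgrad_int y).fun_smul _).add ((hg_int y).smul_const y)
  · rw [((hq_grad y).log (hq_pos y).ne').gradient, hsplit_integral, smul_add,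
      inv_smul_smul₀ (hq_pos y).ne', add_sub_cancel_right, smul_comm]
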